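/- For every s ∈ (0,10), β₀(s) = 0 holds if and only if s = s₀*, where s₀* := (1880·√10 − 3070)/929 + 60·√(16·√10 + 61)/(80·√10 + 269). Moreover, 4 < s₀* < 4.5. -/

import Mathlib

/-!
On `[2, 5]` the absolute values open up and `β₀(s) = 0` says that `(3/10)·√(s²/4 − s + 5)` equals
an affine function of `s`, which must then be nonnegative. Squaring, this becomes a quadratic equation in
`x = s − 2` whose discriminant is `14400·(16√10 + 61)`; of the two roots given by the quadratic
formula one is negative and the other is `s₀* − 2`. Outside `[2, 5]` there is no root: the bound
`2 ≤ √(s²/4 − s + 5) ≤ (s − 2)/2 + 2` together with decimal bounds on `√2` and `√5` makes `β₀`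
positive on `[0, 2]` and negative on `[5, ∞)`.
-/

/-- `β₀(s) = (3/10)·√(s²/4 − s + 5) + (2/(5√5))·|s − 5| − (1/(2√2))·|s − 2|`. -/
noncomputable def beta0 (s : ℝ) : ℝ :=
  3 / 10 * Real.sqrt (s ^ 2 / 4 - s + 5)
    + 2 / (5 * Real.sqrt 5) * |s - 5| - 1 / (2 * Real.sqrt 2) * |s - 2|

/-- `s₀* = (1880·√10 − 3070)/929 + 60·√(16·√10 + 61)/(80·√10 + 269)`. -/
noncomputable def sZeroStar : ℝ :=
  (1880 * Real.sqrt 10 - 3070) / 929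
    + 60 * Real.sqrt (16 * Real.sqrt 10 + 61) / (80 * Real.sqrt 10 + 269)

/-- Squaring `β₀(s) = 0` on `[2, 5]` gives `beta0Quadratic (s - 2) = 0`. -/
noncomputable def beta0Quadratic (x : ℝ) : ℝ :=
  (269 + 80 * √10) * (x * x) + -(240 * √10 + 384) * x + -144

noncomputable def beta0Affine (s : ℝ) : ℝ :=
  √2 / 4 * (s - 2) - 2 * √5 / 25 * (5 - s)

lemma sqrt_two_mul_sqrt_five : √2 * √5 = √10 := by
  rw [← Real.sqrt_mul (by norm_num)]; norm_num

lemma beta0_eq (s : ℝ) :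
    beta0 s = 3 / 10 * √(s ^ 2 / 4 - s + 5) + 2 * √5 / 25 * |s - 5| - √2 / 4 * |s - 2| := by
  have h5 : 2 / (5 * √5) = 2 * √5 / 25 := by
    field_simp; rw [Real.sq_sqrt (by norm_num)]; norm_num
  have h2 : 1 / (2 * √2) = √2 / 4 := by
    field_simp; rw [Real.sq_sqrt (by norm_num)]; norm_num
  rw [beta0, h5, h2]

lemma beta0_eq_sub_beta0Affine {s : ℝ} (h2 : 2 ≤ s) (h5 : s ≤ 5) :
    beta0 s = 3 / 10 * √(s ^ 2 / 4 - s + 5) - beta0Affine s := by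
  rw [beta0_eq, beta0Affine, abs_of_nonpos (by linarith), abs_of_nonneg (by linarith)]
  ring

lemma beta0Quadratic_sub_two (s : ℝ) :
    beta0Quadratic (s - 2)
      = 2000 * (beta0Affine s ^ 2 - (3 / 10 * √(s ^ 2 / 4 - s + 5)) ^ 2) := by
  have h2 : √2 ^ 2 = 2 := Real.sq_sqrt (by norm_num)
  have h5 : √5 ^ 2 = 5 := Real.sq_sqrt (by norm_num)
  rw [beta0Quadratic, beta0Affine, mul_pow,
    Real.sq_sqrt (by nlinarith [sq_nonneg (s - 2)]), ← sqrt_two_mul_sqrt_five]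
  linear_combination -125 * (s - 2) ^ 2 * h2 - 64 / 5 * (5 - s) ^ 2 * h5

lemma beta0_eq_zero_iff_of_mem_Icc {s : ℝ} (h2 : 2 ≤ s) (h5 : s ≤ 5) :
    beta0 s = 0 ↔ beta0Quadratic (s - 2) = 0 ∧ 0 ≤ beta0Affine s := by
  have ht : 0 ≤ 3 / 10 * √(s ^ 2 / 4 - s + 5) := by positivity
  rw [beta0_eq_sub_beta0Affine h2 h5, sub_eq_zero, beta0Quadratic_sub_two]
  constructor
  · intro h
    exact ⟨by rw [h]; ring, h ▸ ht⟩
  · rintro ⟨hq, hL⟩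
    have hsq : (3 / 10 * √(s ^ 2 / 4 - s + 5)) ^ 2 = beta0Affine s ^ 2 := by linarith
    exact (pow_left_inj₀ ht hL two_ne_zero).mp hsq

lemma beta0Affine_nonneg {s : ℝ} (h4 : 4 ≤ s) : 0 ≤ beta0Affine s := by
  have hw : 1.4 < √2 := Real.lt_sqrt_of_sq_lt (by norm_num)
  have hv : √5 < 2.3 := (Real.sqrt_lt' (by norm_num)).mpr (by norm_num)
  rw [beta0Affine]
  nlinarith [mul_le_mul_of_nonneg_left (by linarith : (5 : ℝ) - s ≤ 1) (Real.sqrt_nonneg 5)]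

lemma beta0_pos_of_le_two {s : ℝ} (h0 : 0 ≤ s) (h2 : s ≤ 2) : 0 < beta0 s := by
  have ht : 2 ≤ √(s ^ 2 / 4 - s + 5) :=
    (Real.le_sqrt (by norm_num) (by nlinarith [sq_nonneg (s - 2)])).mpr
      (by nlinarith [sq_nonneg (s - 2)])
  have hw : √2 < 1.5 := (Real.sqrt_lt' (by norm_num)).mpr (by norm_num)
  have hv : 2.2 < √5 := Real.lt_sqrt_of_sq_lt (by norm_num)
  rw [beta0_eq, abs_of_nonpos (by linarith), abs_of_nonpos (by linarith)]
  nlinarith [mul_le_mul_of_nonneg_left (by linarith : (2 : ℝ) - s ≤ 2) (Real.sqrt_nonneg 2),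
    mul_le_mul_of_nonneg_left (by linarith : (3 : ℝ) ≤ 5 - s) (Real.sqrt_nonneg 5)]

lemma beta0_neg_of_five_le {s : ℝ} (h5 : 5 ≤ s) : beta0 s < 0 := by
  have ht : √(s ^ 2 / 4 - s + 5) ≤ (s - 2) / 2 + 2 :=
    (Real.sqrt_le_left (by linarith)).mpr (by nlinarith)
  have hw : 1.414 < √2 := Real.lt_sqrt_of_sq_lt (by norm_num)
  have hv : √5 < 2.237 := (Real.sqrt_lt' (by norm_num)).mpr (by norm_num)
  rw [beta0_eq, abs_of_nonneg (by linarith), abs_of_nonneg (by linarith)]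
  nlinarith [mul_le_mul_of_nonneg_right hv.le (by linarith : (0 : ℝ) ≤ s - 5),
    mul_le_mul_of_nonneg_right hw.le (by linarith : (0 : ℝ) ≤ s - 2)]

lemma sZeroStar_sub_two :
    sZeroStar - 2 = (120 * √10 + 192 + 60 * √(16 * √10 + 61)) / (80 * √10 + 269) := by
  have hr : √10 ^ 2 = 10 := Real.sq_sqrt (by norm_num)
  have hD : 80 * √10 + 269 ≠ 0 := by positivity
  rw [sZeroStar]
  field_simp
  linear_combination 150400 * hr

lemma four_lt_sZeroStar : 4 < sZeroStar := by
  have hr : √10 < 4 := (Real.sqrt_lt' (by norm_num)).mpr (by norm_num)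
  have hu : 10.4 < √(16 * √10 + 61) := Real.lt_sqrt_of_sq_lt (by
    nlinarith [Real.lt_sqrt_of_sq_lt (by norm_num : (3 : ℝ) ^ 2 < 10)])
  rw [← sub_lt_sub_iff_right 2, sZeroStar_sub_two, lt_div_iff₀ (by positivity)]
  linarith

lemma sZeroStar_lt : sZeroStar < 4.5 := by
  have hr : 3 < √10 := Real.lt_sqrt_of_sq_lt (by norm_num)
  have hu : √(16 * √10 + 61) < 11.2 := (Real.sqrt_lt' (by norm_num)).mpr (by
    nlinarith [(Real.sqrt_lt' (by norm_num : (0 : ℝ) < 4)).mpr (by norm_num : (10 : ℝ) < 4 ^ 2)])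
  rw [← sub_lt_sub_iff_right 2, sZeroStar_sub_two, div_lt_iff₀ (by positivity)]
  linarith

lemma beta0Quadratic_eq_zero_iff {x : ℝ} (hx : 0 < x) :
    beta0Quadratic x = 0 ↔ x = sZeroStar - 2 := by
  have hr : √10 ^ 2 = 10 := Real.sq_sqrt (by norm_num)
  have hu : √(16 * √10 + 61) ^ 2 = 16 * √10 + 61 := Real.sq_sqrt (by positivity)
  have hdisc : discrim (269 + 80 * √10) (-(240 * √10 + 384)) (-144)
      = (120 * √(16 * √10 + 61)) * (120 * √(16 * √10 + 61)) := by
    rw [discrim]; linear_combination 57600 * hr - 14400 * hu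
  have hroot : (-(-(240 * √10 + 384)) + 120 * √(16 * √10 + 61)) / (2 * (269 + 80 * √10))
      = sZeroStar - 2 := by
    rw [sZeroStar_sub_two]; field_simp; ring
  have hu_gt : 2 * √10 + 3.2 < √(16 * √10 + 61) :=
    (Real.lt_sqrt (by positivity)).mpr (by nlinarith)
  have hother : (-(-(240 * √10 + 384)) - 120 * √(16 * √10 + 61)) / (2 * (269 + 80 * √10)) < 0 :=
    div_neg_of_neg_of_pos (by linarith) (by positivity)
  rw [beta0Quadratic, quadratic_eq_zero_iff (by positivity) hdisc, hroot]
  exact or_iff_left (by linarith)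

/-- On `(0,10)` the equation `β₀(s) = 0` holds iff `s = s₀*`, and
`4 < s₀* < 4.5`. -/
theorem beta0_root :
    (∀ s ∈ Set.Ioo (0 : ℝ) 10, beta0 s = 0 ↔ s = sZeroStar) ∧
    4 < sZeroStar ∧ sZeroStar < 4.5 := by
  refine ⟨fun s ⟨hs0, _⟩ => ?_, four_lt_sZeroStar, sZeroStar_lt⟩
  rcases le_or_gt s 2 with h2 | h2
  · simp only [(beta0_pos_of_le_two hs0.le h2).ne', false_iff]
    linarith [four_lt_sZeroStar]
  rcases le_or_gt 5 s with h5 | h5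
  · simp only [(beta0_neg_of_five_le h5).ne, false_iff]
    linarith [sZeroStar_lt]
  rw [beta0_eq_zero_iff_of_mem_Icc h2.le h5.le, beta0Quadratic_eq_zero_iff (by linarith),
    sub_left_inj]
  constructor
  · exact And.left
  · rintro rfl
    exact ⟨rfl, beta0Affine_nonneg four_lt_sZeroStar.le⟩
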